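/- arXiv:2009.08235 — 8 statements merged into one kernel-verified Lean document; each statement's English description precedes it below -/
import Mathlib

section
/- Let n be a positive integer and m ∈ {0,...,n-1}, and let r_m be the rotation v ↦ (v+m) mod n acting on {0,...,n-1}. Then two vertices x and y lie in the same cycle of the disjoint cycle decomposition of r_m if and only if x ≡ y (mod gcd(n,m)). -/
/-!
The cycle of `x` under `v ↦ v + m` is the coset `x + ℕ • m`. Since `ZMod n` is finite, natural
multiples of `m` are the same as integer multiples, and by Bézout an integer is congruent
mod `n` to a multiple of `m` exactly when `gcd(n, m)` divides it.
-/

namespace ZMod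

theorem exists_nat_mul_eq_iff_exists_int_mul_eq {n : ℕ} [NeZero n] (a z : ZMod n) :
    (∃ j : ℕ, z = j * a) ↔ ∃ k : ℤ, z = k * a := by
  refine ⟨fun ⟨j, hj⟩ => ⟨j, mod_cast hj⟩, fun ⟨k, hk⟩ => ⟨(k : ZMod n).val, ?_⟩⟩
  rwa [natCast_zmod_val]

theorem exists_int_mul_natCast_eq_intCast_iff (n m : ℕ) (v : ℤ) :
    (∃ k : ℤ, (v : ZMod n) = k * m) ↔ (Nat.gcd n m : ℤ) ∣ v := by
  rw [← Int.gcd_natCast_natCast, Int.coe_gcd, gcd_dvd_iff_exists]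
  simp_rw [← Int.cast_natCast (R := ZMod n) m, ← Int.cast_mul, intCast_eq_intCast_iff_dvd_sub]
  constructor
  · rintro ⟨k, l, hl⟩
    exact ⟨-l, k, by linear_combination -hl⟩
  · rintro ⟨x, y, rfl⟩
    exact ⟨y, -x, by ring⟩

end ZMod

theorem orbital_stmt2_general (n m : ℕ) (hn : 0 < n) (x y : ZMod n) :
    (∃ j : ℕ, y = x + (j : ZMod n) * (m : ZMod n)) ↔
      x.val ≡ y.val [MOD Nat.gcd n m] := by
  have : NeZero n := ⟨hn.ne'⟩
  have hcast : (((y.val : ℤ) - x.val : ℤ) : ZMod n) = y - x := by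
    push_cast
    simp only [ZMod.natCast_zmod_val]
  simp_rw [Nat.modEq_iff_dvd, ← ZMod.exists_int_mul_natCast_eq_intCast_iff, hcast,
    ← ZMod.exists_nat_mul_eq_iff_exists_int_mul_eq, sub_eq_iff_eq_add']

/-- Two vertices `x, y` of `ZMod n` lie in the same cycle of the rotation
`v ↦ v + m` (i.e. `y` is reachable from `x` by iterating the rotation) iff
`x ≡ y (mod gcd(n,m))`. -/
theorem orbital_stmt2 (n m : ℕ) (hn : 0 < n) (hm : m < n) (x y : ZMod n) :
    (∃ j : ℕ, y = x + (j : ZMod n) * (m : ZMod n)) ↔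
      x.val ≡ y.val [MOD Nat.gcd n m] :=
  orbital_stmt2_general n m hn x y
end

section
/- Let n be a positive integer, m ∈ {0,...,n-1}, and let s_m be the reflection v ↦ (2m−v) mod n on {0,...,n-1}. Then the quotient graph Γ_n/s_m is a path with ⌊n/2⌋ + 1 vertices if n is even, and a path with (n+1)/2 vertices together with a loop attached to one end vertex if n is odd. -/
/-!
Two orbits `{m ± a}` and `{m ± b}` contain adjacent vertices iff some `±b ∓ a` is `±1`, i.e. iff
`b - a = ±1` or `a + b = ±1`. For `0 ≤ i, j ≤ ⌊n/2⌋` these congruences modulo `n` lift to `ℕ`,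
except that `i + j ≡ -1` means `i + j + 1 = n`: for odd `n` this forces `i = j = ⌊n/2⌋` (the
loop), for even `n` it is again `|i - j| = 1`.
-/

theorem exists_adj_of_mem_reflection_orbits_iff {R : Type*} [CommRing R] (m a b : R) :
    (∃ v w : R, (w = v + 1 ∨ w = v - 1) ∧ (v = m - a ∨ v = m + a) ∧ (w = m - b ∨ w = m + b)) ↔
      b = a + 1 ∨ a = b + 1 ∨ a + b = 1 ∨ a + b + 1 = 0 := by
  constructor
  · rintro ⟨v, w, hvw, rfl | rfl, rfl | rfl⟩ <;> grind
  · rintro (h | h | h | h)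
    · exact ⟨m + a, m + b, by grind⟩
    · exact ⟨m + a, m + b, by grind⟩
    · exact ⟨m - a, m + b, by grind⟩
    · exact ⟨m - a, m + b, by grind⟩

theorem ZMod.natCast_eq_natCast_iff_of_le {n a b : ℕ} (ha : a ≤ n) (hb : b ≤ n) :
    (a : ZMod n) = b ↔ a = b ∨ a = 0 ∧ b = n ∨ a = n ∧ b = 0 := by
  have hmod : ∀ c ≤ n, c % n = if c = n then 0 else c := fun c hc => by
    split_ifs with h
    · exact h ▸ Nat.mod_self n
    · exact Nat.mod_eq_of_lt (lt_of_le_of_ne hc h)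
  rw [ZMod.natCast_eq_natCast_iff', hmod a ha, hmod b hb]
  split_ifs <;> omega

theorem ZMod.natCast_eq_zero_iff_of_lt_two_mul {n a : ℕ} (ha : 0 < a) (han : a < 2 * n) :
    (a : ZMod n) = 0 ↔ a = n := by
  rw [ZMod.natCast_eq_zero_iff]
  exact ⟨(Nat.eq_of_dvd_of_lt_two_mul ha.ne' · han), (· ▸ dvd_rfl)⟩

theorem orbital_stmt4_general (n m : ℕ) (hn : 0 < n) (i j : ℕ)
    (hi : i ≤ n / 2) (hj : j ≤ n / 2) :
    (∃ v w : ZMod n, (w = v + 1 ∨ w = v - 1) ∧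
        (v = (m : ZMod n) - (i : ZMod n) ∨ v = (m : ZMod n) + (i : ZMod n)) ∧
        (w = (m : ZMod n) - (j : ZMod n) ∨ w = (m : ZMod n) + (j : ZMod n))) ↔
      (j = i + 1 ∨ i = j + 1 ∨ (¬ Even n ∧ i = j ∧ i = n / 2)) := by
  rw [exists_adj_of_mem_reflection_orbits_iff]
  have hj_succ : (j : ZMod n) = i + 1 ↔ j = i + 1 ∨ j = 0 ∧ i + 1 = n ∨ j = n ∧ i + 1 = 0 := by
    rw [← Nat.cast_succ]
    exact ZMod.natCast_eq_natCast_iff_of_le (by omega) (by omega)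
  have hi_succ : (i : ZMod n) = j + 1 ↔ i = j + 1 ∨ i = 0 ∧ j + 1 = n ∨ i = n ∧ j + 1 = 0 := by
    rw [← Nat.cast_succ]
    exact ZMod.natCast_eq_natCast_iff_of_le (by omega) (by omega)
  have h_sum : (i + j : ZMod n) = 1 ↔ i + j = 1 ∨ i + j = 0 ∧ 1 = n ∨ i + j = n ∧ 1 = 0 := by
    rw [← Nat.cast_add, ← Nat.cast_one (R := ZMod n)]
    exact ZMod.natCast_eq_natCast_iff_of_le (by omega) (by omega)
  have h_sum_succ : (i + j + 1 : ZMod n) = 0 ↔ i + j + 1 = n := by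
    rw [← Nat.cast_add, ← Nat.cast_succ]
    exact ZMod.natCast_eq_zero_iff_of_lt_two_mul (by omega) (by omega)
  rw [hj_succ, hi_succ, h_sum, h_sum_succ, Nat.not_even_iff_odd, Nat.odd_iff]
  omega

/-- The quotient of the cycle `Γ_n` by the reflection `s_m : v ↦ 2m - v`:
the orbits are `{m - i, m + i}` for `0 ≤ i ≤ ⌊n/2⌋`, and two orbits are adjacent
in the quotient iff their indices differ by one, or (when `n` is odd) they are
both the end orbit `i = ⌊n/2⌋`, which carries a loop.  Hence the quotient is a
path on `⌊n/2⌋ + 1` vertices, with a loop at one end vertex when `n` is odd. -/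
theorem orbital_stmt4 (n m : ℕ) (hn : 0 < n) (hm : m < n) (i j : ℕ)
    (hi : i ≤ n / 2) (hj : j ≤ n / 2) :
    (∃ v w : ZMod n, (w = v + 1 ∨ w = v - 1) ∧
        (v = (m : ZMod n) - (i : ZMod n) ∨ v = (m : ZMod n) + (i : ZMod n)) ∧
        (w = (m : ZMod n) - (j : ZMod n) ∨ w = (m : ZMod n) + (j : ZMod n))) ↔
      (j = i + 1 ∨ i = j + 1 ∨ (¬ Even n ∧ i = j ∧ i = n / 2)) :=
  orbital_stmt4_general n m hn i j hi hj
end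

section
/- Let n be an even positive integer, m ∈ {0,...,n/2−1}, and let s'_m be the reflection v ↦ (2m+1−v) mod n. Then the quotient graph Γ_n/s'_m is a path on n/2 vertices with a loop attached to each of its two end vertices; in particular it contains a loop, so it admits no proper coloring. -/
/-!
Translating by `m`, the orbit with index `i` is `{-i, i + 1}`, and the four differences between
a point of orbit `i` and a point of orbit `j` are `±(i - j)` and `±(i + j + 1)`. So the orbits
are adjacent iff `i - j = ±1` or `i + j + 1 = ±1` in `ZMod n`. For `n = 2k` and `i, j < k` all
these numbers are small enough that the congruences hold over `ℕ`: the first gives the path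
edges, and `i + j = 0` resp. `i + j + 2 = n` give the loops at the orbits `0` and `k - 1`.
A loop forbids any proper coloring.
-/

def ReflOrbitAdj {R : Type*} [CommRing R] (m i j : R) : Prop :=
  ∃ v w : R, (w = v + 1 ∨ w = v - 1) ∧ (v = m - i ∨ v = m + i + 1) ∧ (w = m - j ∨ w = m + j + 1)

theorem reflOrbitAdj_iff {R : Type*} [CommRing R] (m i j : R) :
    ReflOrbitAdj m i j ↔ i - j = 1 ∨ j - i = 1 ∨ i + j = 0 ∨ i + j + 2 = 0 := by
  constructor
  · rintro ⟨v, w, (rfl | rfl), (rfl | rfl), (h | h)⟩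
    · exact Or.inl (by linear_combination -h)
    · exact Or.inr (Or.inr (Or.inl (by linear_combination -h)))
    · exact Or.inr (Or.inr (Or.inr (by linear_combination h)))
    · exact Or.inr (Or.inl (by linear_combination -h))
    · exact Or.inr (Or.inl (by linear_combination h))
    · exact Or.inr (Or.inr (Or.inr (by linear_combination -h)))
    · exact Or.inr (Or.inr (Or.inl (by linear_combination h)))
    · exact Or.inl (by linear_combination h)
  · rintro (h | h | h | h)
    · exact ⟨m - i, m - j, Or.inl (by linear_combination h), Or.inl rfl, Or.inl rfl⟩
    · exact ⟨m - i, m - j, Or.inr (by linear_combination -h), Or.inl rfl, Or.inl rfl⟩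
    · exact ⟨m - i, m + j + 1, Or.inl (by linear_combination h), Or.inl rfl, Or.inr rfl⟩
    · exact ⟨m - i, m + j + 1, Or.inr (by linear_combination h), Or.inl rfl, Or.inr rfl⟩

namespace ZMod

theorem natCast_eq_natCast_iff_of_lt {n a b : ℕ} (ha : a < n) (hb : b < n) :
    (a : ZMod n) = b ↔ a = b := by
  rw [natCast_eq_natCast_iff', Nat.mod_eq_of_lt ha, Nat.mod_eq_of_lt hb]

theorem natCast_sub_natCast_eq_one_iff {n a b : ℕ} (ha : a < n) (hb : b + 1 < n) :
    (a : ZMod n) - b = 1 ↔ a = b + 1 := by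
  rw [sub_eq_iff_eq_add', ← natCast_eq_natCast_iff_of_lt ha hb]
  push_cast
  ring_nf

theorem natCast_eq_zero_iff_of_le {n a : ℕ} (ha : a ≤ n) : (a : ZMod n) = 0 ↔ a = 0 ∨ a = n := by
  rw [natCast_eq_zero_iff]
  constructor
  · intro h
    rcases ha.lt_or_eq with ha | ha
    exacts [Or.inl (Nat.eq_zero_of_dvd_of_lt h ha), Or.inr ha]
  · rintro (rfl | rfl)
    exacts [dvd_zero n, dvd_rfl]

end ZMod

theorem reflOrbitAdj_natCast_iff {k : ℕ} (m : ZMod (k + k)) {i j : ℕ} (hi : i < k) (hj : j < k) :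
    ReflOrbitAdj m (i : ZMod (k + k)) j ↔
      j = i + 1 ∨ i = j + 1 ∨ (i = j ∧ (i = 0 ∨ i = k - 1)) := by
  have hsum : ((i : ZMod (k + k)) + j = 0) ↔ i + j = 0 := by
    exact_mod_cast (ZMod.natCast_eq_zero_iff_of_le (n := k + k) (a := i + j) (by omega)).trans
      (by omega)
  have hsum₂ : ((i : ZMod (k + k)) + j + 2 = 0) ↔ i + j + 2 = k + k := by
    exact_mod_cast (ZMod.natCast_eq_zero_iff_of_le (n := k + k) (a := i + j + 2) (by omega)).trans
      (by omega)
  rw [reflOrbitAdj_iff, ZMod.natCast_sub_natCast_eq_one_iff (by omega) (by omega),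
    ZMod.natCast_sub_natCast_eq_one_iff (by omega) (by omega), hsum, hsum₂]
  omega

theorem orbital_stmt5_general (n m : ℕ) (hn : 0 < n) (he : Even n) :
    (∀ i j : ℕ, i < n / 2 → j < n / 2 →
      ((∃ v w : ZMod n, (w = v + 1 ∨ w = v - 1) ∧
          (v = (m : ZMod n) - (i : ZMod n) ∨ v = (m : ZMod n) + (i : ZMod n) + 1) ∧
          (w = (m : ZMod n) - (j : ZMod n) ∨ w = (m : ZMod n) + (j : ZMod n) + 1)) ↔
        (j = i + 1 ∨ i = j + 1 ∨ (i = j ∧ (i = 0 ∨ i = n / 2 - 1))))) ∧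
    (∀ (l : ℕ), ¬ ∃ f : ℕ → Fin l, ∀ i j : ℕ, i < n / 2 → j < n / 2 →
      (∃ v w : ZMod n, (w = v + 1 ∨ w = v - 1) ∧
          (v = (m : ZMod n) - (i : ZMod n) ∨ v = (m : ZMod n) + (i : ZMod n) + 1) ∧
          (w = (m : ZMod n) - (j : ZMod n) ∨ w = (m : ZMod n) + (j : ZMod n) + 1)) →
        f i ≠ f j) := by
  obtain ⟨k, rfl⟩ := he
  have hk : (k + k) / 2 = k := by omega
  have adj_iff : ∀ i j : ℕ, i < (k + k) / 2 → j < (k + k) / 2 →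
      (ReflOrbitAdj (m : ZMod (k + k)) i j ↔
        j = i + 1 ∨ i = j + 1 ∨ (i = j ∧ (i = 0 ∨ i = (k + k) / 2 - 1))) := by
    intro i j hi hj
    rw [hk] at hi hj ⊢
    exact reflOrbitAdj_natCast_iff _ hi hj
  have h0 : 0 < (k + k) / 2 := by omega
  exact ⟨adj_iff, fun l ⟨f, hf⟩ => hf 0 0 h0 h0 ((adj_iff 0 0 h0 h0).2 (by simp)) rfl⟩

/-- For even `n`, the quotient of the cycle `Γ_n` by the reflection
`s'_m : v ↦ 2m + 1 - v`: the orbits are `{m - i, m + i + 1}` for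
`0 ≤ i < n/2`, and two orbits are adjacent iff their indices differ by one or
they are both an end orbit (`i = 0` or `i = n/2 - 1`), which carry loops.  So
the quotient is a path on `n/2` vertices with a loop at each end; in particular
it has a loop and admits no proper coloring. -/
theorem orbital_stmt5 (n m : ℕ) (hn : 0 < n) (he : Even n) (hm : m < n / 2) :
    (∀ i j : ℕ, i < n / 2 → j < n / 2 →
      ((∃ v w : ZMod n, (w = v + 1 ∨ w = v - 1) ∧
          (v = (m : ZMod n) - (i : ZMod n) ∨ v = (m : ZMod n) + (i : ZMod n) + 1) ∧
          (w = (m : ZMod n) - (j : ZMod n) ∨ w = (m : ZMod n) + (j : ZMod n) + 1)) ↔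
        (j = i + 1 ∨ i = j + 1 ∨ (i = j ∧ (i = 0 ∨ i = n / 2 - 1))))) ∧
    (∀ (l : ℕ), ¬ ∃ f : ℕ → Fin l, ∀ i j : ℕ, i < n / 2 → j < n / 2 →
      (∃ v w : ZMod n, (w = v + 1 ∨ w = v - 1) ∧
          (v = (m : ZMod n) - (i : ZMod n) ∨ v = (m : ZMod n) + (i : ZMod n) + 1) ∧
          (w = (m : ZMod n) - (j : ZMod n) ∨ w = (m : ZMod n) + (j : ZMod n) + 1)) →
        f i ≠ f j) :=
  orbital_stmt5_general n m hn he
end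

section
/- For any odd positive integer n and any natural number λ, the number of orbits of the rotation group Z/nZ acting on the set of proper λ-colorings of the cycle Γ_n equals (1/n) ∑_{d | n} φ(n/d) (λ−1)^d − λ + 1. -/
/-!
By Burnside's lemma, `n` times the number of orbits is the total number of colourings fixed by
the `n` rotations. A colouring fixed by the rotation by `m` is constant on the cosets of the
subgroup generated by `m`, which is the kernel of `ZMod n → ZMod (gcd n m)`; so these colourings
are the proper colourings of the cycle of length `gcd n m`, and exactly `φ (n / d)` rotations have
`gcd n m = d`.

A proper `q`-colouring of the path on `k + 2` vertices is one of the cycle on `k + 2` vertices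
unless its two ends agree, and then dropping the last vertex gives one of the cycle on `k + 1`
vertices. Hence the numbers `P d` of proper colourings of cycles satisfy
`P (k + 2) + P (k + 1) = q (q - 1) ^ (k + 1)`, so `P d = (q - 1) ^ d + (-1) ^ d (q - 1)`,
which is `(q - 1) ^ d - (q - 1)` for the odd divisors `d` of `n`; finally `∑ φ (n / d) = n`.
-/

open Finset

abbrev ProperPathColoring (α : Type*) (k : ℕ) :=
  {f : Fin (k + 1) → α // ∀ i : Fin k, f i.castSucc ≠ f i.succ}

abbrev ProperCycleColoring (α : Type*) (n : ℕ) :=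
  {f : ZMod n → α // ∀ x, f x ≠ f (x + 1)}

namespace ProperPathColoring

variable {α : Type*}

def snocEquiv (k : ℕ) :
    (Σ p : ProperPathColoring α k, {c : α // c ≠ p.1 (Fin.last k)}) ≃
      ProperPathColoring α (k + 1) where
  toFun pc := ⟨Fin.snoc pc.1.1 pc.2.1, Fin.lastCases
    (by rw [Fin.succ_last, Fin.snoc_last, Fin.snoc_castSucc]; exact pc.2.2.symm)
    fun i => by rw [Fin.succ_castSucc, Fin.snoc_castSucc, Fin.snoc_castSucc]; exact pc.1.2 i⟩
  invFun f := ⟨⟨Fin.init f.1, fun i => by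
      simpa only [Fin.init, Fin.succ_castSucc] using f.2 i.castSucc⟩,
    ⟨f.1 (Fin.last _), (f.2 (Fin.last k)).symm⟩⟩
  left_inv pc := Sigma.subtype_ext (Subtype.ext (by simp)) (by simp)
  right_inv f := Subtype.ext (Fin.snoc_init_self f.1)

theorem card [Fintype α] [DecidableEq α] (k : ℕ) :
    Fintype.card (ProperPathColoring α k) = Fintype.card α * (Fintype.card α - 1) ^ k := by
  induction k with
  | zero =>
    rw [Fintype.card_congr (Equiv.subtypeUnivEquiv fun f i => i.elim0)]
    simp
  | succ k ih =>
    rw [← Fintype.card_congr (snocEquiv k), Fintype.card_sigma]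
    simp [ih, pow_succ, mul_assoc]

def snocHeadEquiv (k : ℕ) :
    {p : ProperPathColoring α k // p.1 (Fin.last k) ≠ p.1 0} ≃
      {p : ProperPathColoring α (k + 1) // p.1 (Fin.last (k + 1)) = p.1 0} where
  toFun p := ⟨⟨Fin.snoc p.1.1 (p.1.1 0), Fin.lastCases
      (by rw [Fin.succ_last, Fin.snoc_last, Fin.snoc_castSucc]; exact p.2)
      fun i => by rw [Fin.succ_castSucc, Fin.snoc_castSucc, Fin.snoc_castSucc]; exact p.1.2 i⟩,
    by simp⟩
  invFun p := ⟨⟨Fin.init p.1.1, fun i => by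
      simpa only [Fin.init, Fin.succ_castSucc] using p.1.2 i.castSucc⟩, by
    simpa only [Fin.init, Fin.succ_last, p.2, Fin.castSucc_zero] using p.1.2 (Fin.last k)⟩
  left_inv p := Subtype.ext (Subtype.ext (by simp))
  right_inv p := by
    refine Subtype.ext (Subtype.ext ?_)
    conv_rhs => rw [← Fin.snoc_init_self p.1.1]
    simp [Fin.init, p.2]

end ProperPathColoring

namespace ProperCycleColoring

variable {α : Type*}

theorem forall_ne_add_one_iff {k : ℕ} (f : Fin (k + 1) → α) :
    (∀ x, f x ≠ f (x + 1)) ↔ (∀ i : Fin k, f i.castSucc ≠ f i.succ) ∧ f (Fin.last k) ≠ f 0 := by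
  refine ⟨fun h => ⟨fun i => ?_, ?_⟩, fun ⟨hpath, hlast⟩ x => ?_⟩
  · simpa only [Fin.coeSucc_eq_succ] using h i.castSucc
  · simpa only [Fin.last_add_one] using h (Fin.last k)
  · induction x using Fin.lastCases with
    | last => rwa [Fin.last_add_one]
    | cast i => rw [Fin.coeSucc_eq_succ]; exact hpath i

def equivPathEndsNe (k : ℕ) :
    ProperCycleColoring α (k + 1) ≃ {p : ProperPathColoring α k // p.1 (Fin.last k) ≠ p.1 0} where
  toFun g := ⟨⟨g.1, ((forall_ne_add_one_iff g.1).1 g.2).1⟩, ((forall_ne_add_one_iff g.1).1 g.2).2⟩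
  invFun p := ⟨p.1.1, (forall_ne_add_one_iff p.1.1).2 ⟨p.1.2, p.2⟩⟩
  left_inv _ := rfl
  right_inv _ := rfl

theorem card_add_two_add_card_add_one [Fintype α] [DecidableEq α] (k : ℕ) :
    Fintype.card (ProperCycleColoring α (k + 2)) + Fintype.card (ProperCycleColoring α (k + 1)) =
      Fintype.card (ProperPathColoring α (k + 1)) := by
  rw [Fintype.card_congr (equivPathEndsNe (k + 1)),
    Fintype.card_congr ((equivPathEndsNe k).trans (ProperPathColoring.snocHeadEquiv k)),
    add_comm, ← Fintype.card_sum, Fintype.card_congr (Equiv.sumCompl _)]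

theorem card_add_one [Fintype α] [DecidableEq α] (k : ℕ) :
    (Fintype.card (ProperCycleColoring α (k + 1)) : ℤ) =
      ((Fintype.card α : ℤ) - 1) ^ (k + 1) + (-1) ^ (k + 1) * ((Fintype.card α : ℤ) - 1) := by
  induction k with
  | zero =>
    have : IsEmpty (ProperCycleColoring α 1) := ⟨fun f => f.2 0 rfl⟩
    simp
  | succ k ih =>
    have hpath : (Fintype.card (ProperPathColoring α (k + 1)) : ℤ) =
        (Fintype.card α : ℤ) * ((Fintype.card α : ℤ) - 1) ^ (k + 1) := by
      rw [ProperPathColoring.card]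
      rcases (Fintype.card α).eq_zero_or_pos with h | h <;> simp [h]
    have hrec := congrArg (Nat.cast (R := ℤ)) (card_add_two_add_card_add_one (α := α) k)
    push_cast at hrec
    rw [hpath, ih] at hrec
    linear_combination hrec

theorem natCard_eq {R : Type*} [CommRing R] [Finite α] {n : ℕ} (hn : n ≠ 0) :
    (Nat.card (ProperCycleColoring α n) : R) =
      ((Nat.card α : R) - 1) ^ n + (-1) ^ n * ((Nat.card α : R) - 1) := by
  classical
  have := Fintype.ofFinite α
  obtain ⟨k, rfl⟩ := Nat.exists_eq_succ_of_ne_zero hn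
  rw [Nat.card_eq_fintype_card, Nat.card_eq_fintype_card]
  exact_mod_cast congrArg (Int.cast : ℤ → R) (card_add_one k)

instance (n : ℕ) : AddAction (ZMod n) (ProperCycleColoring α n) where
  vadd m f := ⟨fun v => f.1 (v + m), fun x => by simpa only [add_right_comm] using f.2 (x + m)⟩
  zero_vadd f := Subtype.ext <| funext fun v => congrArg f.1 (add_zero v)
  add_vadd a b f := Subtype.ext <| funext fun v => congrArg f.1 (add_assoc v a b).symm

theorem vadd_apply {n : ℕ} (m : ZMod n) (f : ProperCycleColoring α n) (v : ZMod n) :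
    (m +ᵥ f).1 v = f.1 (v + m) := rfl

theorem orbitRel_iff {n : ℕ} (f g : ProperCycleColoring α n) :
    AddAction.orbitRel (ZMod n) _ f g ↔ ∃ m : ZMod n, ∀ v, g.1 v = f.1 (v + m) := by
  rw [Setoid.comm']
  simp only [AddAction.orbitRel_apply, AddAction.mem_orbit_iff, Subtype.ext_iff, funext_iff,
    vadd_apply, eq_comm]

end ProperCycleColoring

namespace ZMod

variable {n : ℕ}

/-- Reduction modulo `gcd n m`; its kernel is the subgroup generated by `m`. -/
abbrev gcdProj (m : ZMod n) : ZMod n →+* ZMod (n.gcd m.val) :=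
  castHom (Nat.gcd_dvd_left n m.val) _

theorem gcdProj_self [NeZero n] (m : ZMod n) : gcdProj m m = 0 := by
  rw [castHom_apply, cast_eq_val, natCast_eq_zero_iff]
  exact Nat.gcd_dvd_right n m.val

theorem mem_zmultiples_of_gcdProj_eq_zero [NeZero n] {m x : ZMod n} (hx : gcdProj m x = 0) :
    x ∈ AddSubgroup.zmultiples m := by
  rw [castHom_apply, cast_eq_val, natCast_eq_zero_iff] at hx
  obtain ⟨a, b, hab⟩ := (Int.gcd_dvd_iff (a := n) (b := m.val)).1 hx
  refine ⟨b, ?_⟩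
  dsimp only
  rw [zsmul_eq_mul, ← natCast_zmod_val x, ← Int.cast_natCast, hab]
  push_cast
  rw [natCast_self, natCast_zmod_val]
  ring

theorem sum_gcd_val_eq_sum_divisors [NeZero n] {M : Type*} [AddCommMonoid M] (g : ℕ → M) :
    ∑ m : ZMod n, g (n.gcd m.val) = ∑ d ∈ n.divisors, Nat.totient (n / d) • g d := by
  have hrange : ∑ m : ZMod n, g (n.gcd m.val) = ∑ k ∈ range n, g (n.gcd k) := by
    obtain ⟨k, rfl⟩ := Nat.exists_eq_succ_of_ne_zero (NeZero.ne n)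
    exact Fin.sum_univ_eq_sum_range (fun i => g ((k + 1).gcd i)) (k + 1)
  rw [hrange, ← sum_fiberwise_of_maps_to fun k _ =>
    Nat.mem_divisors.2 ⟨Nat.gcd_dvd_left n k, NeZero.ne n⟩]
  refine sum_congr rfl fun d hd => ?_
  rw [Nat.totient_div_of_dvd (Nat.dvd_of_mem_divisors hd), ← sum_const]
  exact sum_congr rfl fun k hk => by rw [(mem_filter.1 hk).2]

end ZMod

namespace ProperCycleColoring

variable {α : Type*} {n : ℕ} [NeZero n]

open AddAction ZMod

theorem apply_eq_of_gcdProj_eq {m : ZMod n} {f : ProperCycleColoring α n}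
    (hf : f ∈ fixedBy _ m) {v w : ZMod n} (h : gcdProj m v = gcdProj m w) : f.1 v = f.1 w := by
  have hmem : w - v ∈ stabilizer (ZMod n) f :=
    AddSubgroup.zmultiples_le.2 (mem_stabilizer_iff.2 hf)
      (mem_zmultiples_of_gcdProj_eq_zero (by rw [map_sub, h, sub_self]))
  have := congrArg (fun g : ProperCycleColoring α n => g.1 v) (mem_stabilizer_iff.1 hmem)
  simpa only [vadd_apply, add_sub_cancel] using this.symm

noncomputable def fixedByEquiv (m : ZMod n) :
    fixedBy (ProperCycleColoring α n) m ≃ ProperCycleColoring α (n.gcd m.val) :=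
  have hsurj : Function.Surjective (gcdProj m) := ringHom_surjective _
  { toFun f := ⟨f.1.1 ∘ Function.surjInv hsurj, fun y => by
      have hstep : gcdProj m (Function.surjInv hsurj (y + 1)) =
          gcdProj m (Function.surjInv hsurj y + 1) := by
        rw [map_add, map_one, Function.surjInv_eq hsurj, Function.surjInv_eq hsurj]
      simpa only [Function.comp_apply, apply_eq_of_gcdProj_eq f.2 hstep] using f.1.2 _⟩
    invFun F := ⟨⟨F.1 ∘ gcdProj m, fun x => by
        simpa only [Function.comp_apply, map_add, map_one] using F.2 (gcdProj m x)⟩,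
      Subtype.ext <| funext fun v => by
        simp only [vadd_apply, Function.comp_apply, map_add, gcdProj_self, add_zero]⟩
    left_inv f := Subtype.ext <| Subtype.ext <| funext fun v =>
      apply_eq_of_gcdProj_eq f.2 (Function.surjInv_eq hsurj _)
    right_inv F := Subtype.ext <| funext fun y => congrArg F.1 (Function.surjInv_eq hsurj y) }

theorem natCard_orbits_mul [Finite α] :
    Nat.card (orbitRel.Quotient (ZMod n) (ProperCycleColoring α n)) * n =
      ∑ d ∈ n.divisors, Nat.totient (n / d) * Nat.card (ProperCycleColoring α d) := by
  classical
  have := Fintype.ofFinite α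
  have burnside := sum_card_fixedBy_eq_card_orbits_mul_card_addGroup (ZMod n)
    (ProperCycleColoring α n)
  rw [ZMod.card, ← Nat.card_eq_fintype_card] at burnside
  simp_rw [← burnside, ← smul_eq_mul, ← sum_gcd_val_eq_sum_divisors, ← Nat.card_eq_fintype_card]
  exact sum_congr rfl fun m _ => Nat.card_congr (fixedByEquiv m)

end ProperCycleColoring

open ProperCycleColoring AddAction in
theorem orbital_stmt8_general (n l : ℕ) (hodd : Odd n) :
    (Nat.card (Quot (fun f g : {f : ZMod n → Fin l // ∀ x : ZMod n, f x ≠ f (x + 1)} =>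
        ∃ m : ZMod n, ∀ v : ZMod n, g.1 v = f.1 (v + m))) : ℚ) =
      (1 / (n : ℚ)) * ∑ d ∈ n.divisors, (Nat.totient (n / d) : ℚ) * ((l : ℚ) - 1) ^ d
        - (l : ℚ) + 1 := by
  have : NeZero n := ⟨hodd.pos.ne'⟩
  rw [Nat.card_congr (Quot.congrRight fun f g => (orbitRel_iff f g).symm)]
  change (Nat.card (orbitRel.Quotient (ZMod n) (ProperCycleColoring (Fin l) n)) : ℚ) = _
  have hcard : ∀ d ∈ n.divisors, (Nat.card (ProperCycleColoring (Fin l) d) : ℚ) =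
      ((l : ℚ) - 1) ^ d - ((l : ℚ) - 1) := fun d hd => by
    rw [natCard_eq (Nat.pos_of_mem_divisors hd).ne', Nat.card_fin,
      (hodd.of_dvd_nat (Nat.dvd_of_mem_divisors hd)).neg_one_pow]
    ring
  have htotient : ∑ d ∈ n.divisors, (Nat.totient (n / d) : ℚ) = n := by
    exact_mod_cast (Nat.sum_div_divisors n Nat.totient).trans (Nat.sum_totient n)
  have horbits := congrArg (Nat.cast (R := ℚ)) (natCard_orbits_mul (α := Fin l) (n := n))
  push_cast at horbits
  rw [sum_congr rfl fun d hd => by rw [hcard d hd]] at horbits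
  simp only [mul_sub, sum_sub_distrib, ← sum_mul, htotient] at horbits
  have hn : (n : ℚ) ≠ 0 := NeZero.ne _
  field_simp
  linear_combination horbits

/-- For odd `n`, the number of orbits of the rotation group on proper
`l`-colorings of the cycle `Γ_n` (colorings `f` and `g` being equivalent iff
`g = f ∘ r_m` for some rotation `r_m : v ↦ v + m`) equals
`(1/n) ∑_{d ∣ n} φ(n/d) (l-1)^d - l + 1`. -/
theorem orbital_stmt8 (n l : ℕ) (h0 : 0 < n) (hodd : Odd n) :
    (Nat.card (Quot (fun f g : {f : ZMod n → Fin l // ∀ x : ZMod n, f x ≠ f (x + 1)} =>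
        ∃ m : ZMod n, ∀ v : ZMod n, g.1 v = f.1 (v + m))) : ℚ) =
      (1 / (n : ℚ)) * ∑ d ∈ n.divisors, (Nat.totient (n / d) : ℚ) * ((l : ℚ) - 1) ^ d
        - (l : ℚ) + 1 :=
  orbital_stmt8_general n l hodd
end

section
/- For any odd positive integer n ≥ 3 and any natural number λ, the number of orbits of the dihedral group D_n (of order 2n) acting on the set of proper λ-colorings of the cycle Γ_n equals (1/(2n)) ∑_{d | n} φ(n/d)(λ−1)^d − λ/2 + 1/2. -/
/-!
By Burnside's lemma, `2n` times the number of orbits is the total number of colorings fixed by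
the elements of `D_n`. A reflection `v ↦ m - v` of an odd cycle swaps the two endpoints of the
edge `{v, v + 1}` with `2v = m - 1`, so it fixes no proper coloring. The rotation by `m` fixes
exactly the colorings of period `d = gcd(n, m)`, i.e. the proper colorings of the `d`-cycle, of
which there are `(λ-1)^d + (-1)^d (λ-1) = (λ-1)^d - (λ-1)` since `d` is odd; and `φ(n/d)`
rotations have `gcd(n, m) = d`. The count of proper colorings of a `k`-cycle comes from cutting
it open at a vertex: writing `O_k` for the proper paths on `k+1` vertices with distinct ends,
a proper path on `k+2` vertices with equal ends is a path of `O_k` closed up, so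
`O_{k+1} + O_k = λ(λ-1)^{k+1}` counts all proper paths on `k+2` vertices.
-/

open Finset Function

theorem Nat.card_subtype_ne {α : Type*} [Fintype α] [DecidableEq α] (c : α) :
    Nat.card {x : α // x ≠ c} = Nat.card α - 1 := by
  simp only [Nat.card_eq_fintype_card, Fintype.card_subtype_compl, Fintype.card_unique]

abbrev ProperPath (α : Type*) (g : ℕ) :=
  {a : Fin (g + 1) → α // ∀ i : Fin g, a i.castSucc ≠ a i.succ}

abbrev CycleColoring (n : ℕ) (α : Type*) :=
  {f : ZMod n → α // ∀ x, f x ≠ f (x + 1)}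

namespace ProperPath

open Fin

variable {α : Type*}

def snocEquiv (α : Type*) (g : ℕ) :
    ProperPath α (g + 1) ≃ Σ a : ProperPath α g, {x : α // x ≠ a.1 (last g)} where
  toFun a := ⟨⟨init a.1, fun i => by simpa [init] using a.2 i.castSucc⟩,
    ⟨a.1 (last (g + 1)), by simpa [init] using (a.2 (last g)).symm⟩⟩
  invFun b := ⟨snoc b.1.1 b.2.1, fun i => by
    induction i using Fin.lastCases with
    | last => simpa using b.2.2.symm
    | cast j =>
      rw [succ_castSucc, snoc_castSucc, snoc_castSucc]
      exact b.1.2 j⟩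
  left_inv a := by ext; simp
  right_inv b := by ext <;> simp

theorem card [Fintype α] [DecidableEq α] (g : ℕ) :
    Nat.card (ProperPath α g) = Nat.card α * (Nat.card α - 1) ^ g := by
  induction g with
  | zero =>
    rw [Nat.card_congr (Equiv.subtypeUnivEquiv fun a (i : Fin 0) => i.elim0)]
    simp
  | succ g ih =>
    rw [Nat.card_congr (snocEquiv α g), Nat.card_sigma]
    simp only [Nat.card_subtype_ne, Finset.sum_const, card_univ, smul_eq_mul,
      ← Nat.card_eq_fintype_card, ih, pow_succ, mul_assoc]

def closedEquivOpen (α : Type*) (g : ℕ) :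
    {a : ProperPath α (g + 1) // a.1 (last (g + 1)) = a.1 0} ≃
      {a : ProperPath α g // a.1 (last g) ≠ a.1 0} where
  toFun a := ⟨⟨init a.1.1, fun i => by simpa [init] using a.1.2 i.castSucc⟩, by
    simpa [init, a.2] using a.1.2 (last g)⟩
  invFun b := ⟨⟨snoc b.1.1 (b.1.1 0), fun i => by
    induction i using Fin.lastCases with
    | last => simpa using b.2
    | cast j =>
      rw [succ_castSucc, snoc_castSucc, snoc_castSucc]
      exact b.1.2 j⟩, by simp⟩
  left_inv a := by
    ext i
    induction i using Fin.lastCases with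
    | last => simp [a.2, init]
    | cast j => simp [init]
  right_inv b := by ext; simp

theorem card_closed_add_card_open [Finite α] [DecidableEq α] (g : ℕ) :
    Nat.card {a : ProperPath α g // a.1 (last g) = a.1 0} +
      Nat.card {a : ProperPath α g // a.1 (last g) ≠ a.1 0} = Nat.card (ProperPath α g) := by
  rw [← Nat.card_sum, Nat.card_congr (Equiv.sumCompl _)]

end ProperPath

theorem Function.Periodic.apply_natCast_mod {R β : Type*} [Semiring R] {f : R → β} {d : ℕ}
    (hf : Periodic f (d : R)) (k : ℕ) : f ((k % d : ℕ) : R) = f k := by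
  conv_rhs => rw [← Nat.mod_add_div' k d, Nat.cast_add, Nat.cast_mul]
  exact ((hf.nat_mul (k / d)) _).symm

theorem ZMod.periodic_iff_periodic_gcd {n : ℕ} [NeZero n] {β : Type*} (f : ZMod n → β)
    (m : ZMod n) : Periodic f m ↔ Periodic f ((n.gcd m.val : ℕ) : ZMod n) := by
  constructor
  · intro hf
    have hbezout := congrArg (Int.cast : ℤ → ZMod n) (Nat.gcd_eq_gcd_ab n m.val)
    push_cast [ZMod.natCast_self, ZMod.natCast_zmod_val] at hbezout
    rw [hbezout, zero_mul, zero_add, mul_comm]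
    exact hf.int_mul _
  · intro hf
    obtain ⟨c, hc⟩ := Nat.gcd_dvd_right n m.val
    rw [← ZMod.natCast_zmod_val m, hc, Nat.cast_mul, mul_comm]
    exact hf.nat_mul c

theorem ZMod.exists_two_mul_eq_of_odd {n : ℕ} (hn : Odd n) (a : ZMod n) : ∃ v, 2 * v = a := by
  obtain ⟨k, rfl⟩ := hn
  refine ⟨(k + 1) * a, ?_⟩
  have h : ((2 * k + 1 : ℕ) : ZMod (2 * k + 1)) = 0 := ZMod.natCast_self _
  push_cast at h
  linear_combination a * h

theorem ZMod.sum_comp_gcd_val {M : Type*} [AddCommMonoid M] (n : ℕ) [NeZero n] (h : ℕ → M) :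
    ∑ m : ZMod n, h (n.gcd m.val) = ∑ d ∈ n.divisors, Nat.totient (n / d) • h d := by
  have hrange : ∑ m : ZMod n, h (n.gcd m.val) = ∑ j ∈ range n, h (n.gcd j) := by
    obtain ⟨k, rfl⟩ : ∃ k, n = k + 1 := Nat.exists_eq_succ_of_ne_zero (NeZero.ne n)
    exact Fin.sum_univ_eq_sum_range (fun j => h ((k + 1).gcd j)) (k + 1)
  rw [hrange, ← sum_fiberwise_of_maps_to' (t := n.divisors)
    (fun j _ => Nat.mem_divisors.mpr ⟨Nat.gcd_dvd_left n j, NeZero.ne n⟩)]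
  refine sum_congr rfl fun d hd => ?_
  rw [sum_const, Nat.totient_div_of_dvd (Nat.dvd_of_mem_divisors hd)]

theorem MulAction.sum_natCard_fixedBy (G X : Type*) [Group G] [Fintype G] [MulAction G X]
    [Finite X] :
    ∑ g : G, Nat.card (fixedBy X g) = Nat.card (orbitRel.Quotient G X) * Fintype.card G := by
  classical
  have := Fintype.ofFinite X
  simp only [Nat.card_eq_fintype_card]
  exact sum_card_fixedBy_eq_card_orbits_mul_card_group G X

namespace CycleColoring

open Fin

variable {n : ℕ} {α : Type*}

-- `ZMod (g + 1)` is `Fin (g + 1)` by definition, so its addition is that of `Fin (g + 1)`.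
def equivOpenPath (α : Type*) (g : ℕ) :
    CycleColoring (g + 1) α ≃ {a : ProperPath α g // a.1 (last g) ≠ a.1 0} :=
  (Equiv.subtypeEquivRight fun f => by
    show (∀ x : Fin (g + 1), f x ≠ f (x + 1 : Fin (g + 1))) ↔ _
    rw [forall_fin_succ', last_add_one]
    simp only [coeSucc_eq_succ]).trans
    (Equiv.subtypeSubtypeEquivSubtypeInter
      (fun a : Fin (g + 1) → α => ∀ i : Fin g, a i.castSucc ≠ a i.succ)
      (fun a => a (last g) ≠ a 0)).symm

instance : IsEmpty (CycleColoring 1 α) :=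
  ⟨fun f => f.2 0 (congrArg f.1 (Subsingleton.elim _ _))⟩

theorem card_succ_add_card [Fintype α] [DecidableEq α] (g : ℕ) :
    Nat.card (CycleColoring (g + 2) α) + Nat.card (CycleColoring (g + 1) α) =
      Nat.card α * (Nat.card α - 1) ^ (g + 1) := by
  rw [Nat.card_congr (equivOpenPath α g), Nat.card_congr (equivOpenPath α (g + 1)),
    ← Nat.card_congr (ProperPath.closedEquivOpen α g), add_comm,
    ProperPath.card_closed_add_card_open, ProperPath.card]

theorem card_eq (R : Type*) [CommRing R] [Fintype α] [DecidableEq α] {k : ℕ} (hk : k ≠ 0) :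
    (Nat.card (CycleColoring k α) : R) =
      ((Nat.card α : R) - 1) ^ k + (-1) ^ k * ((Nat.card α : R) - 1) := by
  obtain ⟨g, rfl⟩ : ∃ g, k = g + 1 := ⟨k - 1, by omega⟩
  induction g with
  | zero => simp
  | succ g ih =>
    have h := congrArg (Nat.cast : ℕ → R) (card_succ_add_card (α := α) g)
    have hcast : ((Nat.card α * (Nat.card α - 1) ^ (g + 1) : ℕ) : R) =
        (Nat.card α : R) * ((Nat.card α : R) - 1) ^ (g + 1) := by
      cases Nat.card α with
      | zero => simp
      | succ q => push_cast; ring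
    rw [hcast, Nat.cast_add, ih g.succ_ne_zero] at h
    linear_combination h

instance : SMul (DihedralGroup n) (CycleColoring n α) where
  smul
    | .r m, f => ⟨fun v => f.1 (v + m), fun x => by
        simpa only [add_right_comm] using f.2 (x + m)⟩
    | .sr m, f => ⟨fun v => f.1 (m - v), fun x => by
        simpa only [sub_add_cancel, sub_add_eq_sub_sub] using (f.2 (m - x - 1)).symm⟩

@[simp] theorem r_smul_apply (m : ZMod n) (f : CycleColoring n α) (v : ZMod n) :
    (DihedralGroup.r m • f).1 v = f.1 (v + m) := rfl

@[simp] theorem sr_smul_apply (m : ZMod n) (f : CycleColoring n α) (v : ZMod n) :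
    (DihedralGroup.sr m • f).1 v = f.1 (m - v) := rfl

instance : MulAction (DihedralGroup n) (CycleColoring n α) where
  one_smul f := Subtype.ext <| funext fun v => by
    rw [← DihedralGroup.r_zero, r_smul_apply, add_zero]
  mul_smul a b f := by
    rcases a with i | i <;> rcases b with j | j <;> refine Subtype.ext (funext fun v => ?_) <;>
      simp only [DihedralGroup.r_mul_r, DihedralGroup.r_mul_sr, DihedralGroup.sr_mul_r,
        DihedralGroup.sr_mul_sr, r_smul_apply, sr_smul_apply] <;>
      exact congrArg f.1 (by ring)

theorem mem_orbit_iff (f g : CycleColoring n α) :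
    g ∈ MulAction.orbit (DihedralGroup n) f ↔
      ∃ m : ZMod n, (∀ v, g.1 v = f.1 (v + m)) ∨ (∀ v, g.1 v = f.1 (m - v)) := by
  constructor
  · rintro ⟨a | a, rfl⟩
    exacts [⟨a, Or.inl fun v => rfl⟩, ⟨a, Or.inr fun v => rfl⟩]
  · rintro ⟨m, h | h⟩
    exacts [⟨.r m, Subtype.ext (funext fun v => (h v).symm)⟩,
      ⟨.sr m, Subtype.ext (funext fun v => (h v).symm)⟩]

def quotEquivOrbitRelQuotient :
    Quot (fun f g : CycleColoring n α =>
        ∃ m : ZMod n, (∀ v, g.1 v = f.1 (v + m)) ∨ (∀ v, g.1 v = f.1 (m - v))) ≃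
      MulAction.orbitRel.Quotient (DihedralGroup n) (CycleColoring n α) :=
  Quot.congrRight fun f g => (mem_orbit_iff f g).symm.trans MulAction.mem_orbit_symm

theorem sr_smul_ne (hn : Odd n) (m : ZMod n) (f : CycleColoring n α) :
    DihedralGroup.sr m • f ≠ f := by
  intro hf
  obtain ⟨v, hv⟩ := ZMod.exists_two_mul_eq_of_odd hn (m - 1)
  have h := congrFun (congrArg Subtype.val hf) v
  rw [sr_smul_apply, show m - v = v + 1 by linear_combination -hv] at h
  exact f.2 v h.symm

def equivPeriodic [NeZero n] {d : ℕ} (hd : d ∣ n) :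
    CycleColoring d α ≃ {f : CycleColoring n α // Periodic f.1 (d : ZMod n)} :=
  haveI : NeZero d := ⟨fun h => NeZero.ne n (Nat.eq_zero_of_zero_dvd (h ▸ hd))⟩
  let π := ZMod.castHom hd (ZMod d)
  have hπ (k : ℕ) : π k = k := map_natCast π k
  { toFun F := ⟨⟨fun x => F.1 (π x), fun x => by simpa only [map_add, map_one] using F.2 (π x)⟩,
      fun x => by simp only [map_add, hπ, ZMod.natCast_self, add_zero]⟩
    invFun f := ⟨fun y => f.1.1 (y.val : ZMod n), fun y => by
      have hy : y + 1 = ((y.val + 1 : ℕ) : ZMod d) := by push_cast [ZMod.natCast_zmod_val]; rfl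
      simp only [hy, ZMod.val_natCast]
      rw [f.2.apply_natCast_mod, Nat.cast_succ]
      exact f.1.2 _⟩
    left_inv F := by
      ext y
      simp only [hπ, ZMod.natCast_zmod_val]
    right_inv f := by
      ext x
      simp only
      rw [← ZMod.natCast_zmod_val x, hπ, ZMod.val_natCast, f.2.apply_natCast_mod,
        ZMod.natCast_zmod_val] }

theorem card_fixedBy_r [NeZero n] (m : ZMod n) :
    Nat.card (MulAction.fixedBy (CycleColoring n α) (DihedralGroup.r m)) =
      Nat.card (CycleColoring (n.gcd m.val) α) := by
  refine Nat.card_congr ((Equiv.subtypeEquivRight fun f => ?_).trans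
    (equivPeriodic (Nat.gcd_dvd_left n m.val)).symm)
  rw [MulAction.mem_fixedBy, ← ZMod.periodic_iff_periodic_gcd, Subtype.ext_iff, funext_iff]
  rfl

theorem card_orbits_mul (R : Type*) [CommRing R] [Fintype α] [DecidableEq α] (hn : Odd n) :
    (Nat.card (MulAction.orbitRel.Quotient (DihedralGroup n) (CycleColoring n α)) : R) *
        (2 * n) =
      ∑ d ∈ n.divisors, (Nat.totient (n / d) : R) * ((Nat.card α : R) - 1) ^ d -
        n * ((Nat.card α : R) - 1) := by
  have : NeZero n := ⟨hn.pos.ne'⟩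
  have hfix_sr (m : ZMod n) :
      Nat.card (MulAction.fixedBy (CycleColoring n α) (DihedralGroup.sr m)) = 0 :=
    @Nat.card_of_isEmpty _ ⟨fun f => sr_smul_ne hn m f.1 f.2⟩
  have hfix_r (m : ZMod n) :
      (Nat.card (MulAction.fixedBy (CycleColoring n α) (DihedralGroup.r m)) : R) =
        ((Nat.card α : R) - 1) ^ n.gcd m.val - ((Nat.card α : R) - 1) := by
    have hodd : Odd (n.gcd m.val) := hn.of_dvd_nat (Nat.gcd_dvd_left n m.val)
    rw [card_fixedBy_r, card_eq R (Nat.gcd_pos_of_pos_left _ hn.pos).ne', hodd.neg_one_pow]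
    ring
  have hburnside := congrArg (Nat.cast : ℕ → R)
    (MulAction.sum_natCard_fixedBy (DihedralGroup n) (CycleColoring n α))
  rw [← DihedralGroup.equivSum.symm.sum_comp, Fintype.sum_sum_type] at hburnside
  simp only [DihedralGroup.equivSum_symm_apply, hfix_sr, sum_const_zero, add_zero,
    Nat.cast_sum, hfix_r, sum_sub_distrib, ZMod.sum_comp_gcd_val, Finset.sum_const, card_univ,
    ZMod.card, DihedralGroup.card, nsmul_eq_mul, Nat.cast_mul, Nat.cast_ofNat] at hburnside
  rw [← hburnside]
  ring

end CycleColoring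

theorem orbital_stmt10_general (n l : ℕ) (hodd : Odd n) :
    (Nat.card (Quot (fun f g : {f : ZMod n → Fin l // ∀ x : ZMod n, f x ≠ f (x + 1)} =>
        ∃ m : ZMod n, (∀ v : ZMod n, g.1 v = f.1 (v + m)) ∨
          (∀ v : ZMod n, g.1 v = f.1 (m - v)))) : ℚ) =
      (1 / (2 * (n : ℚ))) * ∑ d ∈ n.divisors, (Nat.totient (n / d) : ℚ) * ((l : ℚ) - 1) ^ d
        - (l : ℚ) / 2 + 1 / 2 := by
  have hn : (n : ℚ) ≠ 0 := Nat.cast_ne_zero.mpr hodd.pos.ne'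
  have horbits := CycleColoring.card_orbits_mul ℚ (α := Fin l) hodd
  rw [Nat.card_fin, ← Nat.card_congr CycleColoring.quotEquivOrbitRelQuotient] at horbits
  field_simp
  linear_combination horbits

/-- For odd `n ≥ 3`, the number of orbits of the dihedral group `D_n`
(generated by the rotations `v ↦ v + m` and the reflections `v ↦ m - v`) on
proper `l`-colorings of the cycle `Γ_n` equals
`(1/(2n)) ∑_{d ∣ n} φ(n/d) (l-1)^d - l/2 + 1/2`. -/
theorem orbital_stmt10 (n l : ℕ) (hn : 3 ≤ n) (hodd : Odd n) :
    (Nat.card (Quot (fun f g : {f : ZMod n → Fin l // ∀ x : ZMod n, f x ≠ f (x + 1)} =>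
        ∃ m : ZMod n, (∀ v : ZMod n, g.1 v = f.1 (v + m)) ∨
          (∀ v : ZMod n, g.1 v = f.1 (m - v)))) : ℚ) =
      (1 / (2 * (n : ℚ))) * ∑ d ∈ n.divisors, (Nat.totient (n / d) : ℚ) * ((l : ℚ) - 1) ^ d
        - (l : ℚ) / 2 + 1 / 2 :=
  orbital_stmt10_general n l hodd
end

section
/- For any odd positive integer n and any integer λ, n divides ∑_{d | n} φ(n/d)(λ−1)^d − n(λ−1). -/
/-!
For `x ≥ 0`, `∑_{d ∣ n} φ(n/d) x^d` is `n` times the number of `x`-coloured necklaces of length `n`;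
for arbitrary integers `x` we prove its divisibility by `n` arithmetically. For prime powers the
sums satisfy `S(p^(k+1)) = p·S(p^k) + (x^(p^(k+1)) - x^(p^k))`, and Fermat's little theorem,
lifted along `p`-th powers, makes the last term divisible by `p^(k+1)`. For coprime `a`, `b` the
sum for `a * b` is a combination of sums for `b` at powers of `x`, and symmetrically, so
divisibility by `a` and by `b` combine.
-/

open Finset

def necklaceSum (n : ℕ) (x : ℤ) : ℤ :=
  ∑ d ∈ n.divisors, ((n / d).totient : ℤ) * x ^ d

theorem Int.prime_pow_succ_dvd_pow_prime_pow_succ_sub {p : ℕ} (hp : p.Prime) (x : ℤ) (k : ℕ) :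
    (p : ℤ) ^ (k + 1) ∣ x ^ p ^ (k + 1) - x ^ p ^ k := by
  have h := dvd_sub_pow_of_dvd_sub (Int.ModEq.pow_prime_eq_self hp x).symm.dvd k
  rwa [← pow_mul, ← pow_succ'] at h

theorem necklaceSum_prime_pow {p : ℕ} (hp : p.Prime) (k : ℕ) (x : ℤ) :
    necklaceSum (p ^ k) x = ∑ j ∈ range (k + 1), ((p ^ (k - j)).totient : ℤ) * x ^ p ^ j := by
  rw [necklaceSum, Nat.sum_divisors_prime_pow hp]
  refine sum_congr rfl fun j hj => ?_
  rw [Nat.pow_div (Nat.lt_succ_iff.mp (mem_range.mp hj)) hp.pos]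

theorem necklaceSum_prime_pow_succ {p : ℕ} (hp : p.Prime) (k : ℕ) (x : ℤ) :
    necklaceSum (p ^ (k + 1)) x = p * necklaceSum (p ^ k) x + (x ^ p ^ (k + 1) - x ^ p ^ k) := by
  have hlow : ∀ j ∈ range k, ((p ^ (k + 1 - j)).totient : ℤ) * x ^ p ^ j
      = p * (((p ^ (k - j)).totient : ℤ) * x ^ p ^ j) := by
    intro j hj
    have hj : j < k := mem_range.mp hj
    rw [show k + 1 - j = (k - j) + 1 by omega, pow_succ',
      Nat.totient_mul_of_prime_of_dvd hp (dvd_pow_self p (by omega))]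
    push_cast
    ring
  rw [necklaceSum_prime_pow hp, necklaceSum_prime_pow hp, sum_range_succ, sum_range_succ,
    sum_range_succ, mul_add, mul_sum, sum_congr rfl hlow]
  simp only [Nat.sub_self, Nat.add_sub_cancel_left, pow_zero, pow_one, Nat.totient_one,
    Nat.totient_prime hp]
  push_cast [hp.one_le]
  ring

theorem prime_pow_dvd_necklaceSum {p : ℕ} (hp : p.Prime) (k : ℕ) (x : ℤ) :
    ((p ^ k : ℕ) : ℤ) ∣ necklaceSum (p ^ k) x := by
  induction k with
  | zero => simp
  | succ k ih =>
    rw [Nat.cast_pow] at ih ⊢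
    rw [necklaceSum_prime_pow_succ hp]
    exact dvd_add (by rw [pow_succ']; exact mul_dvd_mul_left _ ih)
      (Int.prime_pow_succ_dvd_pow_prime_pow_succ_sub hp x k)

theorem necklaceSum_mul_of_coprime {a b : ℕ} (hab : a.Coprime b) (x : ℤ) :
    necklaceSum (a * b) x = ∑ u ∈ a.divisors, ((a / u).totient : ℤ) * necklaceSum b (x ^ u) := by
  rw [necklaceSum, Nat.divisors_mul, mul_def, sum_image hab.mul_injOn_divisors, sum_product]
  refine sum_congr rfl fun u hu => ?_
  rw [necklaceSum, mul_sum]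
  refine sum_congr rfl fun v hv => ?_
  have hu := Nat.dvd_of_mem_divisors hu
  have hv := Nat.dvd_of_mem_divisors hv
  have hcop : (a / u).Coprime (b / v) :=
    (hab.coprime_dvd_left (Nat.div_dvd_of_dvd hu)).coprime_dvd_right (Nat.div_dvd_of_dvd hv)
  rw [← Nat.div_mul_div_comm hu hv, Nat.totient_mul hcop, pow_mul]
  push_cast
  ring

theorem dvd_necklaceSum (n : ℕ) (x : ℤ) : (n : ℤ) ∣ necklaceSum n x := by
  induction n using Nat.recOnPosPrimePosCoprime generalizing x with
  | prime_pow p k hp _ => exact prime_pow_dvd_necklaceSum hp k x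
  | zero => simp [necklaceSum]
  | one => simp [necklaceSum]
  | coprime a b _ _ hab iha ihb =>
    have hb : (b : ℤ) ∣ necklaceSum (a * b) x := by
      rw [necklaceSum_mul_of_coprime hab]
      exact dvd_sum fun u _ => (ihb _).mul_left _
    have ha : (a : ℤ) ∣ necklaceSum (a * b) x := by
      rw [mul_comm, necklaceSum_mul_of_coprime hab.symm]
      exact dvd_sum fun v _ => (iha _).mul_left _
    push_cast
    exact (Nat.isCoprime_iff_coprime.mpr hab).mul_dvd ha hb

theorem orbital_stmt12_general (n : ℕ) (l : ℤ) :
    (n : ℤ) ∣ (∑ d ∈ n.divisors, (Nat.totient (n / d) : ℤ) * (l - 1) ^ d) - n * (l - 1) :=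
  dvd_sub (dvd_necklaceSum n (l - 1)) (dvd_mul_right _ _)

/-- For odd positive `n` and any integer `l`,
`n` divides `∑_{d ∣ n} φ(n/d)(l-1)^d - n(l-1)`. -/
theorem orbital_stmt12 (n : ℕ) (hn : 0 < n) (hodd : Odd n) (l : ℤ) :
    (n : ℤ) ∣ (∑ d ∈ n.divisors, (Nat.totient (n / d) : ℤ) * (l - 1) ^ d) - n * (l - 1) :=
  orbital_stmt12_general n l
end

section
/- For any positive integers n and λ, the number of proper λ-colorings of the cycle Γ_n that are fixed by the rotation r_m (i.e., f ∘ r_m = f) equals (λ−1)^k + (−1)^k (λ−1), where k = gcd(n,m), for n ≥ 3. -/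
/-! A coloring fixed by `r_m` is periodic with period `m`, hence (Bézout) with period
`d = gcd n m`, so it factors through `ZMod n → ZMod d`; this identifies the fixed proper colorings
of `Γ_n` with the proper colorings of `Γ_d`. Writing `C_k` for the number of proper colorings
of `Γ_k`, a proper coloring of the path on `k + 2` vertices either gives different colors to its
ends, and is a proper coloring of `Γ_{k+2}`, or the same color, and then deleting the last vertex
leaves a proper coloring of `Γ_{k+1}`. Hence `C_{k+2} + C_{k+1} = λ (λ - 1)^(k+1)`, which with
`C_1 = 0` gives the formula. -/

open Function

variable {α : Type*}

def IsProperPathColoring {k : ℕ} (f : Fin (k + 1) → α) : Prop :=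
  ∀ i : Fin k, f i.castSucc ≠ f i.succ

def IsProperCycleColoring {G : Type*} [Add G] [One G] (f : G → α) : Prop :=
  ∀ x, f x ≠ f (x + 1)

theorem isProperPathColoring_snoc {k : ℕ} {p : Fin (k + 1) → α} {c : α} :
    IsProperPathColoring (Fin.snoc p c : Fin (k + 2) → α) ↔
      IsProperPathColoring p ∧ p (Fin.last k) ≠ c := by
  simp [IsProperPathColoring, Fin.forall_fin_succ', Fin.succ_castSucc, -Fin.castSucc_succ]

theorem isProperCycleColoring_iff {k : ℕ} (f : Fin (k + 1) → α) :
    IsProperCycleColoring f ↔ IsProperPathColoring f ∧ f (Fin.last k) ≠ f 0 := by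
  simp only [IsProperCycleColoring, IsProperPathColoring, Fin.forall_fin_succ',
    Fin.coeSucc_eq_succ, Fin.last_add_one]

theorem cast_card_subtype_ne [Finite α] (a : α) :
    (Nat.card {c // c ≠ a} : ℤ) = Nat.card α - 1 := by
  have := Fintype.ofFinite α
  classical
  rw [Nat.card_eq_fintype_card, Nat.card_eq_fintype_card, Fintype.card_subtype_compl,
    Fintype.card_subtype_eq, Nat.cast_sub (Fintype.card_pos_iff.2 ⟨a⟩), Nat.cast_one]

def properPathColoringsSnocEquiv (k : ℕ) :
    {f : Fin (k + 2) → α // IsProperPathColoring f} ≃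
      Σ p : {p : Fin (k + 1) → α // IsProperPathColoring p}, {c // c ≠ p.1 (Fin.last k)} where
  toFun f :=
    have hf := isProperPathColoring_snoc.1 (by rw [Fin.snoc_init_self]; exact f.2)
    ⟨⟨Fin.init f.1, hf.1⟩, ⟨f.1 (Fin.last _), hf.2.symm⟩⟩
  invFun q := ⟨Fin.snoc q.1.1 q.2.1, isProperPathColoring_snoc.2 ⟨q.1.2, q.2.2.symm⟩⟩
  left_inv f := Subtype.ext (Fin.snoc_init_self _)
  right_inv q := Sigma.subtype_ext (Subtype.ext (Fin.init_snoc (α := fun _ => α) _ _))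
    (Fin.snoc_last (α := fun _ => α) _ _)

theorem card_properPathColorings [Finite α] (k : ℕ) :
    (Nat.card {f : Fin (k + 1) → α // IsProperPathColoring f} : ℤ) =
      Nat.card α * (Nat.card α - 1) ^ k := by
  induction k with
  | zero =>
    rw [Nat.card_congr (Equiv.subtypeUnivEquiv (p := IsProperPathColoring) fun _ i => i.elim0),
      Nat.card_fun]
    simp
  | succ k ih =>
    have := Fintype.ofFinite α
    classical
    rw [Nat.card_congr (properPathColoringsSnocEquiv k), Nat.card_sigma, Nat.cast_sum]
    simp only [cast_card_subtype_ne, Finset.sum_const, Finset.card_univ,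
      ← Nat.card_eq_fintype_card, nsmul_eq_mul, ih]
    ring

theorem card_subtype_and_add_card_subtype_and_not [Finite α] (p q : α → Prop) :
    Nat.card {x // p x ∧ q x} + Nat.card {x // p x ∧ ¬q x} = Nat.card {x // p x} := by
  classical
  rw [← Nat.card_sum, Nat.card_congr ((Equiv.subtypeSubtypeEquivSubtypeInter p q).symm.sumCongr
    (Equiv.subtypeSubtypeEquivSubtypeInter p fun x => ¬q x).symm),
    Nat.card_congr (Equiv.sumCompl _)]

theorem card_properCycleColorings_add [Finite α] (k : ℕ) :
    Nat.card {f : Fin (k + 2) → α // IsProperCycleColoring f} +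
      Nat.card {f : Fin (k + 1) → α // IsProperCycleColoring f} =
        Nat.card {f : Fin (k + 2) → α // IsProperPathColoring f} := by
  rw [← card_subtype_and_add_card_subtype_and_not IsProperPathColoring
    fun f => f (Fin.last _) ≠ f 0,
    Nat.card_congr (Equiv.subtypeEquivRight isProperCycleColoring_iff)]
  congr 1
  refine Nat.card_eq_of_bijective (fun p => ⟨Fin.snoc p.1 (p.1 0), ?_⟩) ⟨?_, ?_⟩
  · have hp := (isProperCycleColoring_iff p.1).1 p.2
    exact ⟨isProperPathColoring_snoc.2 hp, by simp⟩
  · intro p q h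
    exact Subtype.ext (by simpa using congrArg (Fin.init ∘ Subtype.val) h)
  · rintro ⟨f, hf, hlast⟩
    rw [← Fin.snoc_init_self f, isProperPathColoring_snoc] at hf
    have hinit : Fin.init f 0 = f (Fin.last _) := by rw [not_not.1 hlast]; rfl
    refine ⟨⟨Fin.init f, (isProperCycleColoring_iff _).2 ⟨hf.1, ?_⟩⟩, ?_⟩
    · rw [hinit]; exact hf.2
    · exact Subtype.ext (by simp [hinit])

theorem card_properCycleColorings_fin [Finite α] (k : ℕ) :
    (Nat.card {f : Fin (k + 1) → α // IsProperCycleColoring f} : ℤ) =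
      (Nat.card α - 1) ^ (k + 1) + (-1) ^ (k + 1) * (Nat.card α - 1) := by
  induction k with
  | zero =>
    have : IsEmpty {f : Fin 1 → α // IsProperCycleColoring f} := ⟨fun f => f.2 0 rfl⟩
    simp
  | succ k ih =>
    have hrec := congrArg (Nat.cast : ℕ → ℤ) (card_properCycleColorings_add (α := α) k)
    push_cast at hrec
    rw [card_properPathColorings, ih] at hrec
    linear_combination hrec

theorem card_properCycleColorings_zmod [Finite α] (n : ℕ) [NeZero n] :
    (Nat.card {f : ZMod n → α // IsProperCycleColoring f} : ℤ) =
      (Nat.card α - 1) ^ n + (-1) ^ n * (Nat.card α - 1) := by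
  obtain ⟨k, rfl⟩ := Nat.exists_eq_succ_of_ne_zero (NeZero.ne n)
  -- `ZMod (k + 1)` is `Fin (k + 1)` by definition.
  exact card_properCycleColorings_fin k

theorem Function.Periodic.natCast_gcd {n m : ℕ} {f : ZMod n → α}
    (hf : Periodic f (m : ZMod n)) :
    Periodic f (Nat.gcd n m : ZMod n) := by
  have hbezout : (Nat.gcd n m : ZMod n) = Nat.gcdB n m * m := by
    simpa [mul_comm] using congrArg (Int.cast : ℤ → ZMod n) (Nat.gcd_eq_gcd_ab n m)
  rw [hbezout]
  exact hf.int_mul _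

theorem Function.Periodic.apply_eq_of_castHom_eq {n d : ℕ} (hd : d ∣ n) {f : ZMod n → α}
    (hf : Periodic f (d : ZMod n)) {x y : ZMod n}
    (hxy : ZMod.castHom hd (ZMod d) x = ZMod.castHom hd (ZMod d) y) : f x = f y := by
  obtain ⟨a, rfl⟩ := ZMod.intCast_surjective x
  obtain ⟨b, rfl⟩ := ZMod.intCast_surjective y
  rw [map_intCast, map_intCast, ZMod.intCast_eq_intCast_iff_dvd_sub] at hxy
  obtain ⟨c, hc⟩ := hxy
  rw [show b = a + c * d by linarith, Int.cast_add, Int.cast_mul, Int.cast_natCast]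
  exact (hf.int_mul c a).symm

theorem card_periodic_properCycleColorings (n m : ℕ) :
    Nat.card {f : ZMod n → α // IsProperCycleColoring f ∧ Periodic f (m : ZMod n)} =
      Nat.card {g : ZMod (Nat.gcd n m) → α // IsProperCycleColoring g} := by
  set π := ZMod.castHom (Nat.gcd_dvd_left n m) (ZMod (Nat.gcd n m))
  have hπ : Surjective π := ZMod.castHom_surjective _
  have hπm : π m = 0 := by
    rw [map_natCast, ZMod.natCast_eq_zero_iff]
    exact Nat.gcd_dvd_right n m
  symm
  refine Nat.card_eq_of_bijective (fun g => ⟨g.1 ∘ π, fun x => ?_, fun x => ?_⟩) ⟨?_, ?_⟩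
  · simpa [map_add, map_one] using g.2 (π x)
  · simp [hπm]
  · intro g g' h
    exact Subtype.ext (hπ.injective_comp_right (congrArg Subtype.val h))
  · rintro ⟨f, hf, hper⟩
    have hfactor (x : ZMod n) : f (surjInv hπ (π x)) = f x :=
      hper.natCast_gcd.apply_eq_of_castHom_eq _ (surjInv_eq hπ _)
    refine ⟨⟨f ∘ surjInv hπ, fun w => ?_⟩, Subtype.ext (funext hfactor)⟩
    obtain ⟨x, rfl⟩ := hπ w
    rw [← map_one π, ← map_add]
    simpa only [comp_apply, hfactor] using hf x

theorem orbital_stmt16_general (n m l : ℕ) (hn : 3 ≤ n) :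
    (Nat.card {f : ZMod n → Fin l //
        (∀ x : ZMod n, f x ≠ f (x + 1)) ∧ ∀ v : ZMod n, f (v + (m : ZMod n)) = f v} : ℤ) =
      ((l : ℤ) - 1) ^ Nat.gcd n m + (-1 : ℤ) ^ Nat.gcd n m * ((l : ℤ) - 1) := by
  have : NeZero (Nat.gcd n m) := ⟨(Nat.gcd_pos_of_pos_left m (by omega)).ne'⟩
  have key := card_properCycleColorings_zmod (α := Fin l) (Nat.gcd n m)
  rwa [← card_periodic_properCycleColorings, Nat.card_fin] at key

/-- For `n ≥ 3` and `m < n`, the number of proper `l`-colorings of the cycle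
`Γ_n` that are fixed by the rotation `r_m : v ↦ v + m` equals
`(l-1)^k + (-1)^k (l-1)` where `k = gcd(n,m)`. -/
theorem orbital_stmt16 (n m l : ℕ) (hn : 3 ≤ n) (hm : m < n) (hl : 0 < l) :
    (Nat.card {f : ZMod n → Fin l //
        (∀ x : ZMod n, f x ≠ f (x + 1)) ∧ ∀ v : ZMod n, f (v + (m : ZMod n)) = f v} : ℤ) =
      ((l : ℤ) - 1) ^ Nat.gcd n m + (-1 : ℤ) ^ Nat.gcd n m * ((l : ℤ) - 1) :=
  orbital_stmt16_general n m l hn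
end

section
/- For any even integer n ≥ 4, m ∈ {0,...,n/2−1}, and natural number λ, the number of proper λ-colorings of the cycle Γ_n fixed by the reflection s_m : v ↦ (2m−v) mod n equals λ(λ−1)^{n/2}. -/
/-!
Translating by `m` moves the axis of the reflection to `0`. A coloring of the cycle `ZMod (2k)`
fixed by `v ↦ -v` is determined by its values on `0, 1, …, k`, and it is proper exactly when
this restriction is a proper coloring of the path `0 — 1 — ⋯ — k`: the edges of the cycle fold
in pairs onto the `k` edges of the path. A path with `k` edges has `l (l - 1) ^ k` proper
colorings, chosen greedily from one end.
-/

def pathColorings (α : Type*) (k : ℕ) : Set (Fin (k + 1) → α) :=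
  {g | ∀ i : Fin k, g i.castSucc ≠ g i.succ}

namespace pathColorings

variable {α : Type*} {k : ℕ}

lemma apply_ne_of_val_add_one_eq {g : Fin (k + 1) → α} (hg : g ∈ pathColorings α k)
    {a b : Fin (k + 1)} (hab : a.val + 1 = b.val) : g a ≠ g b := by
  have hak : a.val < k := by omega
  convert hg ⟨a, hak⟩ using 2 <;> ext <;> simp [hab]

def snocEquiv (α : Type*) (k : ℕ) :
    pathColorings α (k + 1) ≃ Σ g : pathColorings α k, {x : α // x ≠ g.1 (Fin.last k)} where
  toFun g := ⟨⟨Fin.init g.1, fun i => by simpa [Fin.init] using g.2 i.castSucc⟩,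
    g.1 (Fin.last _), fun h => g.2 (Fin.last k) (by simpa [Fin.init] using h.symm)⟩
  invFun p := ⟨Fin.snoc p.1.1 p.2.1, Fin.lastCases (by simpa using p.2.2.symm) fun i => by
    simpa only [Fin.succ_castSucc, Fin.snoc_castSucc] using p.1.2 i⟩
  left_inv g := by simp
  right_inv p := Sigma.subtype_ext (by ext; simp) (by simp)

theorem card [Finite α] (k : ℕ) :
    Nat.card (pathColorings α k) = Nat.card α * (Nat.card α - 1) ^ k := by
  induction k with
  | zero =>
    refine (Nat.card_congr ?_).trans (mul_one _).symm
    exact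
      { toFun g := g.1 0
        invFun x := ⟨fun _ => x, fun i => i.elim0⟩
        left_inv g := by ext i; simp [Fin.fin_one_eq_zero i]
        right_inv x := rfl }
  | succ k ih =>
    have hfiber (g : pathColorings α k) :
        Nat.card {x : α // x ≠ g.1 (Fin.last k)} = Nat.card α - 1 := by
      classical
      have := Fintype.ofFinite α
      simp [Nat.card_eq_fintype_card, Fintype.card_subtype_compl]
    have := Fintype.ofFinite (pathColorings α k)
    rw [Nat.card_congr (snocEquiv α k), Nat.card_sigma, Finset.sum_congr rfl fun g _ => hfiber g,
      Finset.sum_const, Finset.card_univ, ← Nat.card_eq_fintype_card, ih, smul_eq_mul, pow_succ,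
      mul_assoc]

end pathColorings

namespace ZMod

/-- The distance from `0` to `v` in the cycle on `ZMod (2 * k)`. -/
def foldToPath (k : ℕ) (v : ZMod (2 * k)) : Fin (k + 1) :=
  ⟨min v.val (2 * k - v.val), by omega⟩

variable {k : ℕ} [NeZero k]

lemma foldToPath_neg (v : ZMod (2 * k)) : foldToPath k (-v) = foldToPath k v := by
  have := v.val_lt
  ext
  simp only [foldToPath, neg_val]
  split_ifs with h
  · simp [h]
  · have : v.val ≠ 0 := by rwa [Ne, val_eq_zero]
    omega

lemma foldToPath_natCast (i : Fin (k + 1)) : foldToPath k (i.val : ZMod (2 * k)) = i := by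
  have := i.isLt
  have := NeZero.pos k
  ext
  simp only [foldToPath, val_cast_of_lt (show i.val < 2 * k by omega)]
  omega

lemma natCast_foldToPath (v : ZMod (2 * k)) :
    ((foldToPath k v : ℕ) : ZMod (2 * k)) = v ∨ ((foldToPath k v : ℕ) : ZMod (2 * k)) = -v := by
  have := v.val_lt
  by_cases h : v.val ≤ 2 * k - v.val
  · left
    have hmin : (foldToPath k v : ℕ) = v.val := by simp only [foldToPath]; omega
    rw [hmin, natCast_zmod_val]
  · right
    have hmin : (foldToPath k v : ℕ) = 2 * k - v.val := by simp only [foldToPath]; omega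
    rw [hmin, Nat.cast_sub this.le, natCast_self, natCast_zmod_val, zero_sub]

lemma foldToPath_add_one (v : ZMod (2 * k)) :
    (foldToPath k v).val + 1 = (foldToPath k (v + 1)).val ∨
      (foldToPath k (v + 1)).val + 1 = (foldToPath k v).val := by
  have := v.val_lt
  have := NeZero.pos k
  have hval : (v + 1).val = (v.val + 1) % (2 * k) := by
    rw [val_add, val_one_eq_one_mod, Nat.one_mod_eq_one.mpr (by omega)]
  simp only [foldToPath, hval]
  rcases Nat.lt_or_ge (v.val + 1) (2 * k) with h | h
  · rw [Nat.mod_eq_of_lt h]; omega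
  · rw [show v.val + 1 = 2 * k by omega, Nat.mod_self]; omega

end ZMod

def reflectionFixedColorings (R α : Type*) [CommRing R] (c : R) : Set (R → α) :=
  {f | (∀ x, f x ≠ f (x + 1)) ∧ ∀ v, f (2 * c - v) = f v}

namespace reflectionFixedColorings

def translateEquiv {R α : Type*} [CommRing R] (c : R) :
    reflectionFixedColorings R α c ≃ reflectionFixedColorings R α 0 where
  toFun f := ⟨fun v => f.1 (c + v), fun x => by simpa [add_assoc] using f.2.1 (c + x),
    fun v => by simpa [two_mul, sub_eq_add_neg, add_assoc] using f.2.2 (c + v)⟩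
  invFun f := ⟨fun v => f.1 (v - c), fun x => by simpa [sub_add_eq_add_sub] using f.2.1 (x - c),
    fun v => by
      dsimp only
      rw [show 2 * c - v - c = 2 * 0 - (v - c) by ring]
      exact f.2.2 (v - c)⟩
  left_inv f := by ext; simp
  right_inv f := by ext; simp

def zmodEquivPathColorings (α : Type*) (k : ℕ) [NeZero k] :
    reflectionFixedColorings (ZMod (2 * k)) α 0 ≃ pathColorings α k where
  toFun f := ⟨fun i => f.1 (i.val : ZMod (2 * k)), fun i => by simpa using f.2.1 i⟩
  invFun g := ⟨g.1 ∘ ZMod.foldToPath k,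
    fun x => (ZMod.foldToPath_add_one x).elim (pathColorings.apply_ne_of_val_add_one_eq g.2)
      fun h => (pathColorings.apply_ne_of_val_add_one_eq g.2 h).symm,
    fun v => by simp [ZMod.foldToPath_neg]⟩
  left_inv f := by
    ext v
    rcases ZMod.natCast_foldToPath v with h | h
    · simp [h]
    · simpa [h] using f.2.2 v
  right_inv g := by ext i; simp [ZMod.foldToPath_natCast]

end reflectionFixedColorings

theorem orbital_stmt18_general (n m l : ℕ) (hn : 4 ≤ n) (heven : Even n) :
    Nat.card {f : ZMod n → Fin l //
        (∀ x : ZMod n, f x ≠ f (x + 1)) ∧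
          ∀ v : ZMod n, f (2 * (m : ZMod n) - v) = f v} =
      l * (l - 1) ^ (n / 2) := by
  obtain ⟨k, rfl⟩ := heven.two_dvd
  have : NeZero k := ⟨by omega⟩
  calc _ = Nat.card (pathColorings (Fin l) k) :=
        Nat.card_congr ((reflectionFixedColorings.translateEquiv (m : ZMod (2 * k))).trans
          (reflectionFixedColorings.zmodEquivPathColorings (Fin l) k))
    _ = l * (l - 1) ^ (2 * k / 2) := by
        rw [pathColorings.card, Nat.card_fin, Nat.mul_div_cancel_left k two_pos]

/-- For even `n ≥ 4` and `m < n/2`, the number of proper `l`-colorings of the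
cycle `Γ_n` fixed by the reflection `s_m : v ↦ 2m - v` equals `l(l-1)^{n/2}`. -/
theorem orbital_stmt18 (n m l : ℕ) (hn : 4 ≤ n) (heven : Even n) (hm : m < n / 2) :
    Nat.card {f : ZMod n → Fin l //
        (∀ x : ZMod n, f x ≠ f (x + 1)) ∧
          ∀ v : ZMod n, f (2 * (m : ZMod n) - v) = f v} =
      l * (l - 1) ^ (n / 2) :=
  orbital_stmt18_general n m l hn heven
end
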